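/- Let p>1, 0<R<∞, α₀>-1 and α₁ = p-1. There exists C>0 such that for every u locally absolutely continuous on (0,R] with ∫₀ᴿ|u|^p r^{α₀}dr < ∞ and ∫₀ᴿ|u'|^p r^{p-1}dr < ∞, one has |u(t)| ≤ |log(t/R)|^{(p-1)/p} (∫₀ᴿ|u'|^p r^{p-1}dr)^{1/p} + C‖u‖_{X_R^{1,p}} for all t ∈ (0,R]. -/

import Mathlib

open Real MeasureTheory Set

lemma aux_rpow_add_le {a b e : ℝ} (ha : 0 ≤ a) (hb : 0 ≤ b) (he0 : 0 ≤ e) (he1 : e ≤ 1) :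
    (a + b) ^ e ≤ a ^ e + b ^ e := by
  rw [← Real.coe_toNNReal a ha, ← Real.coe_toNNReal b hb, ← NNReal.coe_add,
    ← NNReal.coe_rpow, ← NNReal.coe_rpow, ← NNReal.coe_rpow, ← NNReal.coe_add, NNReal.coe_le_coe]
  exact NNReal.rpow_add_le_add_rpow _ _ he0 he1

lemma aux_integrable_abs {p : ℝ} (hp : 1 < p) {m R : ℝ} (hm : 0 < m) {v : ℝ → ℝ}
    (hmeas : AEStronglyMeasurable v (volume.restrict (Ioo m R)))
    (hv : IntegrableOn (fun r => |v r| ^ p * r ^ (p-1)) (Ioo m R)) :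
    IntegrableOn (fun r => |v r|) (Ioo m R) := by
  have habs : AEStronglyMeasurable (fun x => |v x|) (volume.restrict (Ioo m R)) := by
    simpa [Real.norm_eq_abs] using hmeas.norm
  have hg : IntegrableOn (fun r => 1 + m ^ (1-p) * (|v r| ^ p * r ^ (p-1))) (Ioo m R) :=
    (integrable_const 1).add (hv.const_mul _)
  refine Integrable.mono' hg habs ?_
  rw [ae_restrict_iff' measurableSet_Ioo]
  filter_upwards with r hr
  have hr0 : 0 < r := hm.trans hr.1
  rw [Real.norm_eq_abs, abs_abs]
  rcases le_total (|v r|) 1 with h | h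
  · have : 0 ≤ m ^ (1-p) * (|v r| ^ p * r ^ (p-1)) := by positivity
    linarith
  · have h1 : |v r| ≤ |v r| ^ p := by
      nth_rewrite 1 [← Real.rpow_one (|v r|)]
      exact Real.rpow_le_rpow_of_exponent_le h hp.le
    have h2 : |v r| ^ p ≤ m ^ (1-p) * (|v r| ^ p * r ^ (p-1)) := by
      have hm' : m ^ (1-p) * m ^ (p-1) = 1 := by
        rw [← Real.rpow_add hm]; norm_num
      have hrm : m ^ (p-1) ≤ r ^ (p-1) :=
        Real.rpow_le_rpow hm.le hr.1.le (by linarith)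
      calc |v r| ^ p = |v r| ^ p * (m ^ (1-p) * m ^ (p-1)) := by rw [hm']; ring
        _ ≤ |v r| ^ p * (m ^ (1-p) * r ^ (p-1)) :=
            mul_le_mul_of_nonneg_left (mul_le_mul_of_nonneg_left hrm (by positivity))
              (by positivity)
        _ = m ^ (1-p) * (|v r| ^ p * r ^ (p-1)) := by ring
    linarith

lemma aux_memLp {p : ℝ} (hp : 1 < p) {μ : Measure ℝ} {f : ℝ → ℝ}
    (hmeas : AEStronglyMeasurable f μ) (hint : Integrable (fun x => |f x| ^ p) μ) :
    MemLp f (ENNReal.ofReal p) μ := by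
  have hp0 : (0:ℝ) < p := lt_trans one_pos hp
  have hne : ENNReal.ofReal p ≠ 0 := by simp [ENNReal.ofReal_eq_zero, not_le, hp0]
  have hnt : ENNReal.ofReal p ≠ ⊤ := ENNReal.ofReal_ne_top
  rw [← memLp_norm_rpow_iff hmeas hne hnt, ENNReal.div_self hne hnt,
    memLp_one_iff_integrable]
  simpa [Real.norm_eq_abs, ENNReal.toReal_ofReal hp0.le] using hint

lemma aux_holder {p : ℝ} (hp : 1 < p) {m R : ℝ} (hm : 0 < m) (hmR : m ≤ R) {v : ℝ → ℝ}
    (hmeas : AEStronglyMeasurable v (volume.restrict (Ioo m R)))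
    (hv : IntegrableOn (fun r => |v r| ^ p * r ^ (p-1)) (Ioo m R)) :
    ∫ r in Ioo m R, |v r| ≤
      (Real.log (R/m)) ^ ((p-1)/p) * (∫ r in Ioo m R, |v r| ^ p * r ^ (p-1)) ^ (1/p) := by
  have hp0 : (0:ℝ) < p := lt_trans one_pos hp
  have hp1 : (0:ℝ) < p - 1 := sub_pos.2 hp
  set q := p / (p-1) with hq
  have hpq : p.HolderConjugate q := Real.HolderConjugate.conjExponent hp
  set e := (p-1)/p with he
  have he0 : 0 ≤ e := div_nonneg hp1.le hp0.le
  have hep : e * p = p - 1 := by rw [he]; field_simp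
  have heq : e * q = 1 := by rw [he, hq]; field_simp
  set F := fun r : ℝ => |v r| * r ^ e with hF
  set G := fun r : ℝ => r ^ (-e) with hG
  haveI : Fact (volume (Ioo m R) < ⊤) := ⟨measure_Ioo_lt_top⟩
  have habs : AEStronglyMeasurable (fun x => |v x|) (volume.restrict (Ioo m R)) := by
    simpa [Real.norm_eq_abs] using hmeas.norm
  have hGmeas : AEStronglyMeasurable G (volume.restrict (Ioo m R)) :=
    (measurable_id.pow_const (-e)).aestronglyMeasurable
  have hFmeas : AEStronglyMeasurable F (volume.restrict (Ioo m R)) :=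
    habs.mul (measurable_id.pow_const e).aestronglyMeasurable
  have hFpkey : ∀ r ∈ Ioo m R, F r ^ p = |v r| ^ p * r ^ (p-1) := by
    intro r hr
    have hr0 : 0 < r := hm.trans hr.1
    simp only [hF]
    rw [Real.mul_rpow (abs_nonneg _) (Real.rpow_nonneg hr0.le _), ← Real.rpow_mul hr0.le, hep]
  have hFp : (fun r => |F r| ^ p) =ᵐ[volume.restrict (Ioo m R)]
      (fun r => |v r| ^ p * r ^ (p-1)) := by
    rw [Filter.EventuallyEq, ae_restrict_iff' measurableSet_Ioo]
    filter_upwards with r hr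
    have hr0 : 0 < r := hm.trans hr.1
    rw [← hFpkey r hr]
    congr 1
    exact abs_of_nonneg (mul_nonneg (abs_nonneg _) (Real.rpow_nonneg hr0.le _))
  have hFLp : MemLp F (ENNReal.ofReal p) (volume.restrict (Ioo m R)) :=
    aux_memLp hp hFmeas (hv.congr hFp.symm)
  have hGLp : MemLp G (ENNReal.ofReal q) (volume.restrict (Ioo m R)) := by
    refine MemLp.of_bound hGmeas (m ^ (-e)) ?_
    rw [ae_restrict_iff' measurableSet_Ioo]
    filter_upwards with r hr
    simp only [hG]
    rw [Real.norm_eq_abs, abs_of_nonneg (Real.rpow_nonneg (hm.trans hr.1).le _)]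
    exact Real.rpow_le_rpow_of_nonpos hm hr.1.le (neg_nonpos.mpr he0)
  have hFnn : 0 ≤ᵐ[volume.restrict (Ioo m R)] F :=
    (ae_restrict_iff' measurableSet_Ioo).2 (ae_of_all _ fun r hr =>
      mul_nonneg (abs_nonneg _) (Real.rpow_nonneg (hm.trans hr.1).le _))
  have hGnn : 0 ≤ᵐ[volume.restrict (Ioo m R)] G :=
    (ae_restrict_iff' measurableSet_Ioo).2 (ae_of_all _ fun r hr =>
      Real.rpow_nonneg (hm.trans hr.1).le _)
  have H := MeasureTheory.integral_mul_le_Lp_mul_Lq_of_nonneg hpq hFnn hGnn hFLp hGLp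
  have hFG : ∫ r in Ioo m R, F r * G r = ∫ r in Ioo m R, |v r| := by
    refine setIntegral_congr_fun measurableSet_Ioo fun r hr => ?_
    have hr0 : 0 < r := hm.trans hr.1
    simp only [hF, hG]
    rw [mul_assoc, ← Real.rpow_add hr0, add_neg_cancel, Real.rpow_zero, mul_one]
  have hFpint : ∫ r in Ioo m R, F r ^ p = ∫ r in Ioo m R, |v r| ^ p * r ^ (p-1) :=
    setIntegral_congr_fun measurableSet_Ioo hFpkey
  have hGqint : ∫ r in Ioo m R, G r ^ q = Real.log (R/m) := by
    have h1 : ∀ r ∈ Ioo m R, G r ^ q = r⁻¹ := fun r hr => by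
      have hr0 : 0 < r := hm.trans hr.1
      simp only [hG]
      rw [← Real.rpow_mul hr0.le, neg_mul, heq, Real.rpow_neg_one]
    rw [setIntegral_congr_fun measurableSet_Ioo h1,
      ← MeasureTheory.integral_Ioc_eq_integral_Ioo, ← intervalIntegral.integral_of_le hmR,
      integral_inv_of_pos hm (hm.trans_le hmR)]
  have h1q : 1/q = e := by rw [hq, he]; field_simp
  rw [hFG, hFpint, hGqint, h1q] at H
  calc ∫ r in Ioo m R, |v r| ≤
      (∫ r in Ioo m R, |v r| ^ p * r ^ (p-1)) ^ (1/p) * Real.log (R/m) ^ e := H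
    _ = Real.log (R/m) ^ ((p-1)/p) * (∫ r in Ioo m R, |v r| ^ p * r ^ (p-1)) ^ (1/p) := by
        rw [he] at *; rw [mul_comm]

/-- Radial lemma, borderline (Adams–Trudinger–Moser) case `α₁ = p - 1`. -/
theorem stmt_2 (R p α₀ : ℝ) (hR : 0 < R) (hp : 1 < p) (hα₀ : -1 < α₀) :
    ∃ C > 0, ∀ u u' : ℝ → ℝ,
      (∀ t ∈ Ioc (0:ℝ) R, HasDerivAt u (u' t) t) →
      IntegrableOn (fun r => |u r| ^ p * r ^ α₀) (Ioo 0 R) →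
      IntegrableOn (fun r => |u' r| ^ p * r ^ (p-1)) (Ioo 0 R) →
      ∀ t ∈ Ioc (0:ℝ) R,
        |u t| ≤ |Real.log (t / R)| ^ ((p-1)/p) *
            (∫ r in Ioo (0:ℝ) R, |u' r| ^ p * r ^ (p-1)) ^ (1/p)
          + C * ((∫ r in Ioo (0:ℝ) R, |u r| ^ p * r ^ α₀)
              + (∫ r in Ioo (0:ℝ) R, |u' r| ^ p * r ^ (p-1))) ^ (1/p) := by
  have hp0 : (0:ℝ) < p := lt_trans one_pos hp
  have hp1 : (0:ℝ) < p - 1 := sub_pos.2 hp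
  have he0 : (0:ℝ) < (p-1)/p := div_pos hp1 hp0
  have he1 : (p-1)/p ≤ 1 := by
    rw [div_le_one hp0]; linarith
  have hR2 : 0 < R/2 := by linarith
  have hR2R : R/2 < R := by linarith
  -- the constant c
  have hcont_rpow : ContinuousOn (fun r : ℝ => r ^ α₀) (Icc (R/2) R) := fun r hr =>
    (Real.continuousAt_rpow_const r α₀
      (Or.inl (ne_of_gt (lt_of_lt_of_le hR2 hr.1)))).continuousWithinAt
  have hci : IntegrableOn (fun r : ℝ => r ^ α₀) (Ioo (R/2) R) :=
    (hcont_rpow.integrableOn_Icc).mono_set Ioo_subset_Icc_self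
  set c := ∫ r in Ioo (R/2) R, r ^ α₀ with hc
  have hcpos : 0 < c := by
    have hii : IntervalIntegrable (fun r : ℝ => r ^ α₀) volume (R/2) R :=
      (intervalIntegrable_iff_integrableOn_Ioo_of_le hR2R.le).2 hci
    have h := intervalIntegral.intervalIntegral_pos_of_pos_on hii
      (fun x hx => Real.rpow_pos_of_pos (hR2.trans hx.1) α₀) hR2R
    rwa [intervalIntegral.integral_of_le hR2R.le, integral_Ioc_eq_integral_Ioo] at h
  refine ⟨Real.log 2 ^ ((p-1)/p) + (c ^ (1/p))⁻¹,
    add_pos (Real.rpow_pos_of_pos (Real.log_pos one_lt_two) _)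
      (inv_pos.2 (Real.rpow_pos_of_pos hcpos _)), ?_⟩
  intro u u' hderiv hBint hAint t ht
  obtain ⟨ht0, htR⟩ := ht
  set A := ∫ r in Ioo (0:ℝ) R, |u' r| ^ p * r ^ (p-1) with hAdef
  set B := ∫ r in Ioo (0:ℝ) R, |u r| ^ p * r ^ α₀ with hBdef
  have hA0 : 0 ≤ A := setIntegral_nonneg measurableSet_Ioo fun r hr =>
    mul_nonneg (Real.rpow_nonneg (abs_nonneg _) _) (Real.rpow_nonneg hr.1.le _)
  have hB0 : 0 ≤ B := setIntegral_nonneg measurableSet_Ioo fun r hr =>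
    mul_nonneg (Real.rpow_nonneg (abs_nonneg _) _) (Real.rpow_nonneg hr.1.le _)
  -- minimum point s₀
  have hucont : ContinuousOn (fun x => |u x|) (Icc (R/2) R) := fun x hx =>
    (((hderiv x ⟨hR2.trans_le hx.1, hx.2⟩).continuousAt).continuousWithinAt).abs
  obtain ⟨s₀, hs₀mem, hs₀min⟩ :=
    isCompact_Icc.exists_isMinOn (nonempty_Icc.2 hR2R.le) hucont
  have hs₀Ioc : s₀ ∈ Ioc (0:ℝ) R := ⟨hR2.trans_le hs₀mem.1, hs₀mem.2⟩
  -- bound |u s₀|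
  have hBsub : IntegrableOn (fun r => |u r| ^ p * r ^ α₀) (Ioo (R/2) R) :=
    hBint.mono_set (Ioo_subset_Ioo hR2.le le_rfl)
  have key : |u s₀| ^ p * c ≤ B := by
    have h1 : |u s₀| ^ p * c = ∫ r in Ioo (R/2) R, |u s₀| ^ p * r ^ α₀ := by
      rw [hc, ← integral_const_mul]
    have h2 : (∫ r in Ioo (R/2) R, |u s₀| ^ p * r ^ α₀) ≤
        ∫ r in Ioo (R/2) R, |u r| ^ p * r ^ α₀ := by
      refine setIntegral_mono_on (hci.const_mul _) hBsub measurableSet_Ioo fun r hr => ?_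
      exact mul_le_mul_of_nonneg_right
        (Real.rpow_le_rpow (abs_nonneg _) (hs₀min (Ioo_subset_Icc_self hr)) hp0.le)
        (Real.rpow_nonneg (hR2.trans hr.1).le _)
    have h3 : (∫ r in Ioo (R/2) R, |u r| ^ p * r ^ α₀) ≤ B := by
      refine setIntegral_mono_set hBint ?_ (HasSubset.Subset.eventuallyLE
        (Ioo_subset_Ioo hR2.le le_rfl))
      exact (ae_restrict_iff' measurableSet_Ioo).2 (ae_of_all _ fun r hr =>
        mul_nonneg (Real.rpow_nonneg (abs_nonneg _) _) (Real.rpow_nonneg hr.1.le _))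
    linarith [h1, h2, h3]
  have hus₀ : |u s₀| ≤ (c ^ (1/p))⁻¹ * B ^ (1/p) := by
    have h1 : |u s₀| ^ p ≤ B / c := (le_div_iff₀ hcpos).2 key
    have h2 : (|u s₀| ^ p) ^ (1/p) ≤ (B / c) ^ (1/p) :=
      Real.rpow_le_rpow (Real.rpow_nonneg (abs_nonneg _) _) h1 (by positivity)
    rwa [← Real.rpow_mul (abs_nonneg _), mul_one_div, div_self hp0.ne', Real.rpow_one,
      Real.div_rpow hB0 hcpos.le, div_eq_inv_mul] at h2
  -- the set Ioo m R
  set m := min t s₀ with hmdef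
  have hm0 : 0 < m := lt_min ht0 hs₀Ioc.1
  have hmt : m ≤ t := min_le_left _ _
  have hms : m ≤ s₀ := min_le_right _ _
  have hmR : m ≤ R := hmt.trans htR
  -- measurability of u' on Ioo m R
  have hmeasu' : AEStronglyMeasurable u' (volume.restrict (Ioo m R)) := by
    have hae : u' =ᵐ[volume.restrict (Ioo m R)] deriv u := by
      rw [Filter.EventuallyEq, ae_restrict_iff' measurableSet_Ioo]
      filter_upwards with r hr
      exact ((hderiv r ⟨hm0.trans hr.1, hr.2.le⟩).deriv).symm
    exact ((measurable_deriv u).aestronglyMeasurable.mono_measure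
      Measure.restrict_le_self).congr hae.symm
  have hAsubint : IntegrableOn (fun r => |u' r| ^ p * r ^ (p-1)) (Ioo m R) :=
    hAint.mono_set (Ioo_subset_Ioo hm0.le le_rfl)
  have hintabs : IntegrableOn (fun r => |u' r|) (Ioo m R) :=
    aux_integrable_abs hp hm0 hmeasu' hAsubint
  -- FTC bound
  have hdiff : |u t - u s₀| ≤ ∫ r in Ioo m R, |u' r| := by
    set M := max t s₀ with hMdef
    have hMR : M ≤ R := max_le htR hs₀Ioc.2
    have hmM : m ≤ M := min_le_max
    have hIcc : Icc m M ⊆ Ioc 0 R := fun x hx => ⟨hm0.trans_le hx.1, hx.2.trans hMR⟩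
    have hii : IntervalIntegrable u' volume m M := by
      rw [intervalIntegrable_iff_integrableOn_Ioo_of_le hmM]
      have habs' : IntegrableOn (fun r => |u' r|) (Ioo m M) :=
        hintabs.mono_set (Ioo_subset_Ioo le_rfl hMR)
      refine Integrable.mono' habs' (hmeasu'.mono_measure
        (Measure.restrict_mono (Ioo_subset_Ioo le_rfl hMR) le_rfl)) ?_
      exact ae_of_all _ fun x => le_of_eq (Real.norm_eq_abs _)
    have hFTC : ∫ r in m..M, u' r = u M - u m := by
      refine intervalIntegral.integral_eq_sub_of_hasDerivAt (fun x hx => ?_) hii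
      rw [uIcc_of_le hmM] at hx
      exact hderiv x (hIcc hx)
    have habs : |u M - u m| ≤ ∫ r in Ioo m M, |u' r| := by
      rw [← hFTC]
      calc |∫ r in m..M, u' r| ≤ ∫ r in m..M, |u' r| :=
            intervalIntegral.abs_integral_le_integral_abs hmM
        _ = ∫ r in Ioo m M, |u' r| := by
            rw [intervalIntegral.integral_of_le hmM, integral_Ioc_eq_integral_Ioo]
    have hmono : (∫ r in Ioo m M, |u' r|) ≤ ∫ r in Ioo m R, |u' r| := by
      refine setIntegral_mono_set hintabs ?_
        (HasSubset.Subset.eventuallyLE (Ioo_subset_Ioo le_rfl hMR))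
      exact (ae_restrict_iff' measurableSet_Ioo).2 (ae_of_all _ fun r _ => abs_nonneg _)
    have : |u t - u s₀| = |u M - u m| := by
      rcases le_total t s₀ with h | h
      · rw [hMdef, hmdef, max_eq_right h, min_eq_left h, abs_sub_comm]
      · rw [hMdef, hmdef, max_eq_left h, min_eq_right h]
    linarith [habs, hmono, this.le, this.ge]
  -- Hölder
  have hHolder : (∫ r in Ioo m R, |u' r|) ≤
      (Real.log (R/m)) ^ ((p-1)/p) * (∫ r in Ioo m R, |u' r| ^ p * r ^ (p-1)) ^ (1/p) :=
    aux_holder hp hm0 hmR hmeasu' hAsubint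
  have hAsub0 : 0 ≤ ∫ r in Ioo m R, |u' r| ^ p * r ^ (p-1) :=
    setIntegral_nonneg measurableSet_Ioo fun r hr =>
      mul_nonneg (Real.rpow_nonneg (abs_nonneg _) _) (Real.rpow_nonneg (hm0.trans hr.1).le _)
  have hAsubA : (∫ r in Ioo m R, |u' r| ^ p * r ^ (p-1)) ≤ A := by
    refine setIntegral_mono_set hAint ?_
      (HasSubset.Subset.eventuallyLE (Ioo_subset_Ioo hm0.le le_rfl))
    exact (ae_restrict_iff' measurableSet_Ioo).2 (ae_of_all _ fun r hr =>
      mul_nonneg (Real.rpow_nonneg (abs_nonneg _) _) (Real.rpow_nonneg hr.1.le _))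
  have hAsubA' : (∫ r in Ioo m R, |u' r| ^ p * r ^ (p-1)) ^ (1/p) ≤ A ^ (1/p) :=
    Real.rpow_le_rpow hAsub0 hAsubA (by positivity)
  -- log estimates
  have hlogt0 : 0 ≤ Real.log (R/t) :=
    Real.log_nonneg ((one_le_div ht0).2 htR)
  have hlog : Real.log (R/m) ≤ Real.log (R/t) + Real.log 2 := by
    rcases le_total t s₀ with h | h
    · rw [hmdef, min_eq_left h]
      have := Real.log_nonneg (by norm_num : (1:ℝ) ≤ 2)
      linarith
    · rw [hmdef, min_eq_right h]
      have h1 : Real.log (R/s₀) ≤ Real.log 2 := by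
        apply Real.log_le_log (div_pos hR hs₀Ioc.1)
        rw [div_le_iff₀ hs₀Ioc.1]
        linarith [hs₀mem.1]
      linarith
  have hlogm0 : 0 ≤ Real.log (R/m) :=
    Real.log_nonneg ((one_le_div hm0).2 hmR)
  have hlogrpow : (Real.log (R/m)) ^ ((p-1)/p) ≤
      (Real.log (R/t)) ^ ((p-1)/p) + (Real.log 2) ^ ((p-1)/p) := by
    calc (Real.log (R/m)) ^ ((p-1)/p) ≤ (Real.log (R/t) + Real.log 2) ^ ((p-1)/p) :=
          Real.rpow_le_rpow hlogm0 hlog he0.le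
      _ ≤ (Real.log (R/t)) ^ ((p-1)/p) + (Real.log 2) ^ ((p-1)/p) :=
          aux_rpow_add_le hlogt0 (Real.log_nonneg (by norm_num)) he0.le he1
  -- |log (t/R)| = log (R/t)
  have habslog : |Real.log (t/R)| = Real.log (R/t) := by
    rw [abs_of_nonpos (Real.log_nonpos (by positivity) ((div_le_one hR).2 htR)),
      ← Real.log_inv, inv_div]
  -- final rpow comparisons
  have hABp : A ^ (1/p) ≤ (B + A) ^ (1/p) :=
    Real.rpow_le_rpow hA0 (by linarith) (by positivity)
  have hBBp : B ^ (1/p) ≤ (B + A) ^ (1/p) :=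
    Real.rpow_le_rpow hB0 (by linarith) (by positivity)
  -- assemble
  have main : |u t| ≤ |u s₀| + ∫ r in Ioo m R, |u' r| := by
    have := abs_sub_abs_le_abs_sub (u t) (u s₀)
    linarith [hdiff]
  have hfinal : |u t| ≤ ((Real.log (R/t)) ^ ((p-1)/p) + (Real.log 2) ^ ((p-1)/p)) * A ^ (1/p)
      + (c ^ (1/p))⁻¹ * B ^ (1/p) := by
    have h1 : (∫ r in Ioo m R, |u' r|) ≤
        ((Real.log (R/t)) ^ ((p-1)/p) + (Real.log 2) ^ ((p-1)/p)) * A ^ (1/p) := by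
      calc (∫ r in Ioo m R, |u' r|) ≤
          (Real.log (R/m)) ^ ((p-1)/p) * (∫ r in Ioo m R, |u' r| ^ p * r ^ (p-1)) ^ (1/p) :=
            hHolder
        _ ≤ ((Real.log (R/t)) ^ ((p-1)/p) + (Real.log 2) ^ ((p-1)/p)) * A ^ (1/p) := by
            exact mul_le_mul hlogrpow hAsubA' (Real.rpow_nonneg hAsub0 _)
              (add_nonneg (Real.rpow_nonneg hlogt0 _)
                (Real.rpow_nonneg (Real.log_nonneg (by norm_num)) _))
    linarith [main, hus₀]
  rw [habslog]
  calc |u t| ≤ ((Real.log (R/t)) ^ ((p-1)/p) + (Real.log 2) ^ ((p-1)/p)) * A ^ (1/p)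
      + (c ^ (1/p))⁻¹ * B ^ (1/p) := hfinal
    _ = (Real.log (R/t)) ^ ((p-1)/p) * A ^ (1/p)
        + ((Real.log 2) ^ ((p-1)/p) * A ^ (1/p) + (c ^ (1/p))⁻¹ * B ^ (1/p)) := by ring
    _ ≤ (Real.log (R/t)) ^ ((p-1)/p) * A ^ (1/p)
        + ((Real.log 2) ^ ((p-1)/p) * (B + A) ^ (1/p) + (c ^ (1/p))⁻¹ * (B + A) ^ (1/p)) := by
        have g1 : (Real.log 2) ^ ((p-1)/p) * A ^ (1/p) ≤
            (Real.log 2) ^ ((p-1)/p) * (B + A) ^ (1/p) :=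
          mul_le_mul_of_nonneg_left hABp (Real.rpow_nonneg (Real.log_nonneg (by norm_num)) _)
        have g2 : (c ^ (1/p))⁻¹ * B ^ (1/p) ≤ (c ^ (1/p))⁻¹ * (B + A) ^ (1/p) :=
          mul_le_mul_of_nonneg_left hBBp (by positivity)
        linarith
    _ = Real.log (R/t) ^ ((p-1)/p) * A ^ (1/p)
        + (Real.log 2 ^ ((p-1)/p) + (c ^ (1/p))⁻¹) * (B + A) ^ (1/p) := by ring
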